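/- Let X be a δ-hyperbolic geodesic metric space and H a collection of uniformly C-quasiconvex subsets. Then the electric space E(X,H) is Δ-hyperbolic, where Δ depends only on δ and C. In particular, X is weakly hyperbolic relative to H. -/

import Mathlib

open Metric Set Filter

/-- The Gromov four-point condition: the distance function `d` is `δ`-hyperbolic. -/
def GromovHyperbolicWith {X : Type*} (d : X → X → ℝ) (δ : ℝ) : Prop :=
  ∀ x y z w : X, d x y + d z w ≤ max (d x z + d y w) (d x w + d y z) + 2 * δ

/-- `f` restricted to `[s, t]` is a unit-speed geodesic for the distance function `d`. -/
def IsGeodesicWith {X : Type*} (d : X → X → ℝ) (f : ℝ → X) (s t : ℝ) : Prop :=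
  ∀ u ∈ Set.Icc s t, ∀ v ∈ Set.Icc s t, d (f u) (f v) = |u - v|

/-- A geodesic segment for the metric of `X`. -/
def IsGeodesicSegment {X : Type*} [PseudoMetricSpace X] (f : ℝ → X) (s t : ℝ) : Prop :=
  IsGeodesicWith (fun a b => dist a b) f s t

/-- `X` is a geodesic metric space. -/
def GeodesicSpace (X : Type*) [PseudoMetricSpace X] : Prop :=
  ∀ x y : X, ∃ f : ℝ → X, f 0 = x ∧ f (dist x y) = y ∧ IsGeodesicSegment f 0 (dist x y)

/-- A `(P, P)`-quasigeodesic with respect to the distance function `d`. -/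
def QuasiGeodesicWith {X : Type*} (d : X → X → ℝ) (P s t : ℝ) (f : ℝ → X) : Prop :=
  ∀ u ∈ Set.Icc s t, ∀ v ∈ Set.Icc s t,
    |u - v| / P - P ≤ d (f u) (f v) ∧ d (f u) (f v) ≤ P * |u - v| + P

/-- A subset `A` is `C`-quasiconvex: any geodesic joining two points of `A` stays in the
`C`-neighbourhood of `A`. -/
def QuasiconvexSet {X : Type*} [PseudoMetricSpace X] (C : ℝ) (A : Set X) : Prop :=
  ∀ x ∈ A, ∀ y ∈ A, ∀ (f : ℝ → X) (s t : ℝ),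
    IsGeodesicSegment f s t → f s = x → f t = y →
    ∀ u ∈ Set.Icc s t, Metric.infDist (f u) A ≤ C

open Classical in
/-- Cost of an elementary step in the electric (coned-off) space: inside a coned-off set of
the collection the cost is at most `1` (travel through the cone point). -/
noncomputable def stepCost {X : Type*} [PseudoMetricSpace X] (H : Set (Set X)) (a b : X) : ℝ :=
  if ∃ A ∈ H, a ∈ A ∧ b ∈ A then min 1 (dist a b) else dist a b

/-- The electric pseudometric of Farb on `X`, obtained by electrocuting (coning off) each
set of the collection `H`. -/
noncomputable def elecDist {X : Type*} [PseudoMetricSpace X] (H : Set (Set X)) (x y : X) : ℝ :=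
  sInf {r : ℝ | ∃ (n : ℕ) (c : Fin (n + 1) → X), c 0 = x ∧ c (Fin.last n) = y ∧
    r = ∑ i : Fin n, stepCost H (c i.castSucc) (c i.succ)}

/-- An electro-ambient `P`-quasigeodesic without backtracking: a `P`-quasigeodesic for the
electric metric which traverses each electrocuted set along a genuine geodesic of `X`
(the maximal subsegments through a coned-off set have been replaced by geodesics of `X`). -/
def ElectroAmbientQG {X : Type*} [PseudoMetricSpace X] (H : Set (Set X)) (P s t : ℝ)
    (f : ℝ → X) : Prop :=
  QuasiGeodesicWith (elecDist H) P s t f ∧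
    ∀ A ∈ H, ∀ u v : ℝ, s ≤ u → u ≤ v → v ≤ t → (∀ w ∈ Set.Icc u v, f w ∈ A) →
      IsGeodesicSegment f u v

/-- Geodesic convexity of a subset. -/
def GeodConvex {X : Type*} [PseudoMetricSpace X] (A : Set X) : Prop :=
  ∀ (f : ℝ → X) (s t : ℝ), IsGeodesicSegment f s t → f s ∈ A → f t ∈ A →
    ∀ u ∈ Set.Icc s t, f u ∈ A

/-- The geodesic convex hull of a subset. -/
def geodHull {X : Type*} [PseudoMetricSpace X] (A : Set X) : Set X :=
  ⋂₀ {C : Set X | A ⊆ C ∧ GeodConvex C}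

/-- The Gromov product of `x` and `y` based at `o`. -/
noncomputable def gromovProd {X : Type*} [PseudoMetricSpace X] (o x y : X) : ℝ :=
  (dist o x + dist o y - dist x y) / 2

/-- A metrically proper map. -/
def MetricallyProper {X Y : Type*} [PseudoMetricSpace X] [PseudoMetricSpace Y]
    (i : Y → X) : Prop :=
  ∀ (y₀ : Y) (R : ℝ), ∃ N : ℝ, ∀ y : Y, N ≤ dist y y₀ → R ≤ dist (i y) (i y₀)

/-- `K` is precisely invariant under the action of `G`: the universal-cover formulation of
`π₁`-injectivity (incompressibility) of the piece of the quotient corresponding to `K`. -/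
def PreciselyInvariant (G : Type*) [Group G] {M : Type*} [MulAction G M] (K : Set M) : Prop :=
  ∀ g : G, (∃ x ∈ K, g • x ∈ K) → ∀ x ∈ K, g • x ∈ K

/-- No parabolics: every nontrivial element of the group achieves its minimal displacement
(so every nontrivial element is hyperbolic rather than parabolic). -/
def NoParabolics (G : Type*) (M : Type*) [Group G] [MulAction G M]
    [PseudoMetricSpace M] : Prop :=
  ∀ g : G, g ≠ 1 → ∃ x : M, ∀ y : M, dist (g • x) x ≤ dist (g • y) y

/-!
Electric distances are realised, up to an additive error `1`, by *taut* chains: chains of points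
whose steps cost at most `1` each (longer steps are subdivided along geodesics). The heart of the
proof is that an `X`-geodesic `[x, y]` stays within electric distance `trackingRadius δ C` of every
taut chain from `x` to `y`. For chains of cost at most `2 ^ k`, halving the chain and using thin
triangles gives the bound `O(δ k + C)`, quasiconvexity controlling the geodesics that join two
points of a coned-off set. If a point `q` of the geodesic were at electric distance `ρ` larger than
`trackingRadius δ C` from a taut chain, then the part of the chain between its first and last
points within `2 ρ` of `q` would be a taut chain of electric length at most `4 ρ` passing near `q`,
so that `ρ = O(δ log ρ + C)`; the remaining parts of the chain are handled by induction on its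
length.

Consequently geodesics of `X` are electrically taut, and a connectedness argument along `[x, y]`
finds a point `p` close to taut chains from `w` to `x` and from `w` to `y`, so that the electric
Gromov product `(x | y)_w` is `d_e(w, p)` up to a constant. A point of `[x, z] ∪ [z, y]` that is
`3δ`-close to `p` then bounds `min ((x | z)_w, (z | y)_w)` by `(x | y)_w` plus a constant, which is
the four-point condition for the electric metric.
-/

lemma GromovHyperbolicWith.mono {X : Type*} {d : X → X → ℝ} {δ δ' : ℝ}
    (h : GromovHyperbolicWith d δ) (hδ : δ ≤ δ') : GromovHyperbolicWith d δ' :=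
  fun x y z w => (h x y z w).trans (by linarith)

lemma QuasiconvexSet.mono {X : Type*} [PseudoMetricSpace X] {C C' : ℝ} {A : Set X}
    (h : QuasiconvexSet C A) (hC : C ≤ C') : QuasiconvexSet C' A :=
  fun x hx y hy f s t hf hfs hft u hu => (h x hx y hy f s t hf hfs hft u hu).trans hC

lemma IsPreconnected.exists_le_and_le {α : Type*} [TopologicalSpace α] {S : Set α}
    (hS : IsPreconnected S) (hSc : IsClosed S) {a b : α → ℝ} (ha : ContinuousOn a S)
    (hb : ContinuousOn b S) {R : ℝ} {s t : α} (hs : s ∈ S) (ht : t ∈ S) (has : a s ≤ R)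
    (hbt : b t ≤ R) (hab : ∀ u ∈ S, a u ≤ R ∨ b u ≤ R) : ∃ u ∈ S, a u ≤ R ∧ b u ≤ R := by
  obtain ⟨u, huS, ⟨-, hua⟩, -, hub⟩ := isPreconnected_closed_iff.1 hS _ _
    (ha.preimage_isClosed_of_isClosed hSc isClosed_Iic)
    (hb.preimage_isClosed_of_isClosed hSc isClosed_Iic)
    (fun u hu => (hab u hu).imp (fun h => ⟨hu, h⟩) (fun h => ⟨hu, h⟩))
    ⟨s, hs, hs, has⟩ ⟨t, ht, ht, hbt⟩
  exact ⟨u, huS, hua, hub⟩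

lemma List.exists_getElem_forall_mem_take_not {α : Type*} {P : α → Prop} {l : List α}
    (h : ∃ a ∈ l, P a) : ∃ i, ∃ hi : i < l.length, P l[i] ∧ ∀ a ∈ l.take i, ¬ P a := by
  induction l with
  | nil => simp at h
  | cons a l ih =>
    by_cases ha : P a
    · exact ⟨0, by simp, ha, by simp⟩
    obtain ⟨i, hi, hPi, hbefore⟩ := ih <| by
      obtain ⟨b, hb, hPb⟩ := h
      exact ⟨b, (List.mem_cons.1 hb).resolve_left (by rintro rfl; exact ha hPb), hPb⟩
    refine ⟨i + 1, by simpa using hi, by simpa using hPi, fun b hb => ?_⟩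
    rcases List.mem_cons.1 (List.take_succ_cons ▸ hb) with rfl | hb
    exacts [ha, hbefore b hb]

namespace Electric

structure IsChainFromTo {X : Type*} (x y : X) (l : List X) : Prop where
  head?_eq : l.head? = some x
  getLast?_eq : l.getLast? = some y

namespace IsChainFromTo

variable {X : Type*} {x y : X} {l : List X}

lemma ne_nil (h : IsChainFromTo x y l) : l ≠ [] := by
  rintro rfl; exact absurd h.head?_eq (by simp)

lemma head_mem (h : IsChainFromTo x y l) : x ∈ l :=
  List.mem_of_mem_head? h.head?_eq

lemma getLast_mem (h : IsChainFromTo x y l) : y ∈ l :=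
  List.mem_of_mem_getLast? h.getLast?_eq

lemma getElem_zero (h : IsChainFromTo x y l) (hl : 0 < l.length) : l[0] = x := by
  simpa [List.head?_eq_getElem?, List.getElem?_eq_getElem hl] using h.head?_eq

lemma getElem_length_sub_one (h : IsChainFromTo x y l) (hl : l.length - 1 < l.length) :
    l[l.length - 1] = y := by
  simpa [List.getLast?_eq_getElem?, List.getElem?_eq_getElem hl] using h.getLast?_eq

lemma pair (x y : X) : IsChainFromTo x y [x, y] := ⟨rfl, rfl⟩

lemma singleton (x : X) : IsChainFromTo x x [x] := ⟨rfl, rfl⟩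

lemma reverse (h : IsChainFromTo x y l) : IsChainFromTo y x l.reverse :=
  ⟨by rw [List.head?_reverse, h.getLast?_eq], by rw [List.getLast?_reverse, h.head?_eq]⟩

lemma take (h : IsChainFromTo x y l) {i : ℕ} (hi : i < l.length) :
    IsChainFromTo x l[i] (l.take (i + 1)) := by
  refine ⟨?_, ?_⟩
  · rw [List.head?_take]; simp [h.head?_eq]
  · rw [← List.take_concat_get hi, List.concat_eq_append, List.getLast?_concat]

lemma drop (h : IsChainFromTo x y l) {i : ℕ} (hi : i < l.length) :
    IsChainFromTo l[i] y (l.drop i) := by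
  refine ⟨by rw [List.drop_eq_getElem_cons hi]; rfl, ?_⟩
  rw [List.getLast?_drop, if_neg (by omega), h.getLast?_eq]

end IsChainFromTo

variable {X : Type*} [PseudoMetricSpace X] (H : Set (Set X))

section StepCost

lemma stepCost_nonneg (a b : X) : 0 ≤ stepCost H a b := by
  unfold stepCost; split
  · exact le_min zero_le_one dist_nonneg
  · exact dist_nonneg

lemma stepCost_le_dist (a b : X) : stepCost H a b ≤ dist a b := by
  unfold stepCost; split
  · exact min_le_right _ _
  · exact le_rfl

lemma stepCost_comm (a b : X) : stepCost H a b = stepCost H b a := by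
  have hsymm : (∃ A ∈ H, a ∈ A ∧ b ∈ A) ↔ ∃ A ∈ H, b ∈ A ∧ a ∈ A :=
    exists_congr fun _ => and_congr_right fun _ => and_comm
  classical
  rw [stepCost, stepCost, dist_comm a b]
  exact if_congr hsymm rfl rfl

lemma stepCost_le_one_of_mem {A : Set X} (hA : A ∈ H) {a b : X} (ha : a ∈ A) (hb : b ∈ A) :
    stepCost H a b ≤ 1 := by
  rw [stepCost, if_pos ⟨A, hA, ha, hb⟩]
  exact min_le_left _ _

lemma stepCost_eq_dist_or (a b : X) :
    stepCost H a b = dist a b ∨ (stepCost H a b = 1 ∧ ∃ A ∈ H, a ∈ A ∧ b ∈ A) := by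
  unfold stepCost
  split_ifs with hA
  · rcases le_total (dist a b) 1 with h | h
    · exact .inl (min_eq_right h)
    · exact .inr ⟨min_eq_left h, hA⟩
  · exact .inl rfl

end StepCost

section Chains

noncomputable def chainCost : List X → ℝ
  | [] => 0
  | [_] => 0
  | a :: b :: l => stepCost H a b + chainCost (b :: l)

@[simp] lemma chainCost_nil : chainCost H ([] : List X) = 0 := rfl

@[simp] lemma chainCost_singleton (a : X) : chainCost H [a] = 0 := rfl

lemma chainCost_cons_cons (a b : X) (l : List X) :
    chainCost H (a :: b :: l) = stepCost H a b + chainCost H (b :: l) := rfl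

lemma chainCost_pair (a b : X) : chainCost H [a, b] = stepCost H a b := by
  simp [chainCost_cons_cons]

lemma chainCost_nonneg (l : List X) : 0 ≤ chainCost H l := by
  induction l with
  | nil => simp
  | cons a l ih =>
    cases l with
    | nil => simp
    | cons b l => exact add_nonneg (stepCost_nonneg H a b) ih

lemma chainCost_eq_zero_of_length_le_one {l : List X} (h : l.length ≤ 1) :
    chainCost H l = 0 := by
  match l, h with
  | [], _ => rfl
  | [_], _ => rfl

lemma chainCost_append_cons (l : List X) (m : X) (t : List X) :
    chainCost H (l ++ m :: t) = chainCost H (l ++ [m]) + chainCost H (m :: t) := by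
  induction l with
  | nil => simp
  | cons a l ih =>
    cases l with
    | nil => simp [chainCost_cons_cons]
    | cons b l =>
      simp only [List.cons_append, chainCost_cons_cons] at ih ⊢
      rw [ih]; ring

lemma chainCost_reverse (l : List X) : chainCost H l.reverse = chainCost H l := by
  induction l with
  | nil => simp
  | cons a l ih =>
    cases l with
    | nil => simp
    | cons b l =>
      rw [List.reverse_cons, List.reverse_cons, List.append_assoc, List.singleton_append,
        chainCost_append_cons, ← List.reverse_cons, ih, chainCost_pair, chainCost_cons_cons,
        stepCost_comm, add_comm]

lemma chainCost_take_add_drop (l : List X) {i : ℕ} (hi : i < l.length) :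
    chainCost H (l.take (i + 1)) + chainCost H (l.drop i) = chainCost H l := by
  conv_rhs => rw [← List.take_append_drop i l]
  rw [List.drop_eq_getElem_cons hi, chainCost_append_cons, ← List.take_concat_get hi,
    List.concat_eq_append]

lemma chainCost_ofFn {n : ℕ} (c : Fin (n + 1) → X) :
    chainCost H (List.ofFn c) = ∑ i : Fin n, stepCost H (c i.castSucc) (c i.succ) := by
  induction n with
  | zero => simp
  | succ n ih =>
    have hsucc := ih fun i => c i.succ
    rw [List.ofFn_succ] at hsucc ⊢
    rw [List.ofFn_succ, chainCost_cons_cons, hsucc, Fin.sum_univ_succ]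
    simp

lemma chainCost_map_range (g : ℕ → X) (n : ℕ) :
    chainCost H ((List.range (n + 1)).map g) =
      ∑ i ∈ Finset.range n, stepCost H (g i) (g (i + 1)) := by
  induction n with
  | zero => simp
  | succ n ih =>
    rw [List.range_succ, List.map_append, List.map_singleton, Finset.sum_range_succ, ← ih,
      List.range_succ, List.map_append, List.map_singleton, List.append_assoc,
      List.singleton_append, chainCost_append_cons, chainCost_pair]

end Chains

section ElecDist

def chainCosts (x y : X) : Set ℝ :=
  {r : ℝ | ∃ (n : ℕ) (c : Fin (n + 1) → X), c 0 = x ∧ c (Fin.last n) = y ∧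
    r = ∑ i : Fin n, stepCost H (c i.castSucc) (c i.succ)}

lemma nonneg_of_mem_chainCosts {x y : X} {r : ℝ} (hr : r ∈ chainCosts H x y) : 0 ≤ r := by
  obtain ⟨n, c, -, -, rfl⟩ := hr
  exact Finset.sum_nonneg fun i _ => stepCost_nonneg H _ _

lemma bddBelow_chainCosts (x y : X) : BddBelow (chainCosts H x y) :=
  ⟨0, fun _ => nonneg_of_mem_chainCosts H⟩

variable {H} {x y z : X} {l : List X}

lemma IsChainFromTo.chainCost_mem (h : IsChainFromTo x y l) :
    chainCost H l ∈ chainCosts H x y := by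
  obtain _ | ⟨a, t⟩ := l
  · exact absurd rfl h.ne_nil
  refine ⟨t.length, fun i => (a :: t)[(i : ℕ)], h.getElem_zero _, ?_, ?_⟩
  · exact h.getElem_length_sub_one _
  · exact (congrArg (chainCost H) List.ofFn_getElem).symm.trans (chainCost_ofFn H _)

lemma elecDist_le_chainCost (h : IsChainFromTo x y l) : elecDist H x y ≤ chainCost H l :=
  csInf_le (bddBelow_chainCosts H x y) h.chainCost_mem

lemma exists_chainCost_lt (x y : X) {ε : ℝ} (hε : 0 < ε) :
    ∃ l : List X, IsChainFromTo x y l ∧ chainCost H l < elecDist H x y + ε := by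
  obtain ⟨_, ⟨n, c, hc0, hcn, rfl⟩, hlt⟩ := exists_lt_of_csInf_lt
    ⟨_, (IsChainFromTo.pair x y).chainCost_mem⟩ (lt_add_of_pos_right (elecDist H x y) hε)
  refine ⟨List.ofFn c, ⟨?_, ?_⟩, by rwa [chainCost_ofFn]⟩
  · rw [List.ofFn_succ, List.head?_cons, hc0]
  · rw [List.ofFn_succ', List.concat_eq_append, List.getLast?_concat, ← hcn]

variable (H)

lemma elecDist_nonneg (x y : X) : 0 ≤ elecDist H x y :=
  le_csInf ⟨_, (IsChainFromTo.pair x y).chainCost_mem⟩ fun _ => nonneg_of_mem_chainCosts H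

@[simp] lemma elecDist_self (x : X) : elecDist H x x = 0 :=
  le_antisymm (by simpa using elecDist_le_chainCost (H := H) (IsChainFromTo.singleton x))
    (elecDist_nonneg H x x)

lemma elecDist_le_stepCost (x y : X) : elecDist H x y ≤ stepCost H x y := by
  simpa [chainCost_pair] using elecDist_le_chainCost (H := H) (IsChainFromTo.pair x y)

lemma elecDist_le_dist (x y : X) : elecDist H x y ≤ dist x y :=
  (elecDist_le_stepCost H x y).trans (stepCost_le_dist H x y)

lemma elecDist_le_one_of_mem {A : Set X} (hA : A ∈ H) (hx : x ∈ A) (hy : y ∈ A) :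
    elecDist H x y ≤ 1 :=
  (elecDist_le_stepCost H x y).trans (stepCost_le_one_of_mem H hA hx hy)

lemma elecDist_comm (x y : X) : elecDist H x y = elecDist H y x := by
  suffices key : ∀ a b : X, elecDist H a b ≤ elecDist H b a from
    le_antisymm (key x y) (key y x)
  intro a b
  refine le_of_forall_pos_le_add fun ε hε => ?_
  obtain ⟨l, hl, hcost⟩ := exists_chainCost_lt (H := H) b a hε
  have := elecDist_le_chainCost (H := H) hl.reverse
  rw [chainCost_reverse] at this
  linarith

lemma elecDist_triangle (x y z : X) : elecDist H x z ≤ elecDist H x y + elecDist H y z := by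
  refine le_of_forall_pos_le_add fun ε hε => ?_
  obtain ⟨l₁, hl₁, hcost₁⟩ := exists_chainCost_lt (H := H) x y (half_pos hε)
  obtain ⟨l₂, hl₂, hcost₂⟩ := exists_chainCost_lt (H := H) y z (half_pos hε)
  obtain ⟨l₁, rfl⟩ := List.getLast?_eq_some_iff.1 hl₁.getLast?_eq
  obtain ⟨l₂, rfl⟩ := List.head?_eq_some_iff.1 hl₂.head?_eq
  have hglued : IsChainFromTo x z (l₁ ++ y :: l₂) := by
    refine ⟨?_, ?_⟩
    · simpa [List.head?_append] using hl₁.head?_eq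
    · simpa [List.getLast?_append] using hl₂.getLast?_eq
  have := elecDist_le_chainCost (H := H) hglued
  rw [chainCost_append_cons] at this
  linarith

lemma elecDist_le_dist_add (x y z : X) : elecDist H x z ≤ dist x y + elecDist H y z :=
  (elecDist_triangle H x y z).trans (by linarith [elecDist_le_dist H x y])

lemma IsChainFromTo.elecDist_add_elecDist_le (h : IsChainFromTo x y l) {c : X} (hc : c ∈ l) :
    elecDist H x c + elecDist H c y ≤ chainCost H l := by
  obtain ⟨i, hi, rfl⟩ := List.getElem_of_mem hc
  linarith [elecDist_le_chainCost (H := H) (h.take hi), elecDist_le_chainCost (H := H) (h.drop hi),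
    chainCost_take_add_drop H l hi]

end ElecDist

section Geodesics

structure IsGeodesicFromTo (f : ℝ → X) (x y : X) : Prop where
  isGeodesicSegment : IsGeodesicSegment f 0 (dist x y)
  apply_zero : f 0 = x
  apply_dist : f (dist x y) = y

lemma exists_isGeodesicFromTo (hG : GeodesicSpace X) (x y : X) :
    ∃ f, IsGeodesicFromTo f x y :=
  let ⟨f, h0, h1, hf⟩ := hG x y
  ⟨f, hf, h0, h1⟩

namespace IsGeodesicFromTo

variable {f : ℝ → X} {x y : X} {u v : ℝ}

lemma dist_apply_apply (hf : IsGeodesicFromTo f x y) (hu : u ∈ Icc 0 (dist x y))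
    (hv : v ∈ Icc 0 (dist x y)) : dist (f u) (f v) = |u - v| :=
  hf.isGeodesicSegment u hu v hv

lemma dist_apply (hf : IsGeodesicFromTo f x y) (hu : u ∈ Icc 0 (dist x y)) :
    dist x (f u) = u := by
  rw [← hf.apply_zero, hf.dist_apply_apply ⟨le_rfl, dist_nonneg⟩ hu, zero_sub, abs_neg,
    abs_of_nonneg hu.1]

lemma dist_apply_right (hf : IsGeodesicFromTo f x y) (hu : u ∈ Icc 0 (dist x y)) :
    dist (f u) y = dist x y - u := by
  conv_lhs => rw [← hf.apply_dist]
  rw [hf.dist_apply_apply hu ⟨dist_nonneg, le_rfl⟩, abs_of_nonpos (by linarith [hu.2]), neg_sub]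

lemma reverse (hf : IsGeodesicFromTo f x y) : IsGeodesicFromTo (fun s => f (dist x y - s)) y x := by
  refine ⟨fun u hu v hv => ?_, by simpa using hf.apply_dist,
    by simpa [dist_comm] using hf.apply_zero⟩
  rw [dist_comm y x] at hu hv
  show dist (f _) (f _) = _
  rw [hf.dist_apply_apply ⟨by linarith [hu.2], by linarith [hu.1]⟩
    ⟨by linarith [hv.2], by linarith [hv.1]⟩, abs_sub_comm]
  ring_nf

end IsGeodesicFromTo

end Geodesics

section ThinTriangles

variable {δ : ℝ}

lemma exists_dist_apply_le_gromovProd (hX : GromovHyperbolicWith (fun a b : X => dist a b) δ)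
    {g : ℝ → X} {x z : X} (hg : IsGeodesicFromTo g x z) (w : X) :
    ∃ t ∈ Icc 0 (dist x z), dist w (g t) ≤ gromovProd w x z + 2 * δ := by
  set t := (dist x z + dist w x - dist w z) / 2 with htdef
  have ht : t ∈ Icc 0 (dist x z) :=
    ⟨by linarith [dist_triangle w x z], by linarith [dist_triangle w z x, dist_comm z x]⟩
  refine ⟨t, ht, ?_⟩
  have h4 := hX w (g t) x z
  have hxt := hg.dist_apply ht
  have htz := hg.dist_apply_right ht
  simp only [dist_comm (g t) x, hxt, htz] at h4
  rw [max_eq_left (by linarith)] at h4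
  unfold gromovProd
  linarith

lemma slim_triangle (hX : GromovHyperbolicWith (fun a b : X => dist a b) δ) {f g h : ℝ → X}
    {x y z : X} (hf : IsGeodesicFromTo f x y) (hg : IsGeodesicFromTo g x z)
    (hh : IsGeodesicFromTo h z y) {u : ℝ} (hu : u ∈ Icc 0 (dist x y)) :
    (∃ s ∈ Icc 0 (dist x z), dist (f u) (g s) ≤ 3 * δ) ∨
      (∃ s ∈ Icc 0 (dist z y), dist (f u) (h s) ≤ 3 * δ) := by
  have hxp := hf.dist_apply hu
  have hpy := hf.dist_apply_right hu
  have h4 := hX x y z (f u)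
  simp only [dist_comm y (f u), dist_comm z (f u), dist_comm y z, hxp, hpy] at h4
  rcases max_cases (dist x z + (dist x y - u)) (u + dist z y) with ⟨hmax, -⟩ | ⟨hmax, -⟩
  · obtain ⟨s, hs, hds⟩ := exists_dist_apply_le_gromovProd hX hg (f u)
    refine .inl ⟨s, hs, ?_⟩
    unfold gromovProd at hds
    linarith [dist_comm (f u) x]
  · obtain ⟨s, hs, hds⟩ := exists_dist_apply_le_gromovProd hX hh (f u)
    refine .inr ⟨s, hs, ?_⟩
    unfold gromovProd at hds
    linarith

end ThinTriangles

section TautChains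

abbrev HasShortSteps (l : List X) : Prop := l.IsChain fun a b => stepCost H a b ≤ 1

lemma exists_hasShortSteps_of_step (hG : GeodesicSpace X) (a b : X) :
    ∃ l, IsChainFromTo a b l ∧ HasShortSteps H l ∧ chainCost H l ≤ stepCost H a b := by
  by_cases h1 : stepCost H a b ≤ 1
  · exact ⟨[a, b], .pair a b, List.isChain_pair.2 h1, (chainCost_pair H a b).le⟩
  have hd : stepCost H a b = dist a b :=
    (stepCost_eq_dist_or H a b).resolve_right fun h => h1 h.1.le
  obtain ⟨f, hf⟩ := exists_isGeodesicFromTo hG a b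
  set D := dist a b
  set n := ⌈D⌉₊
  have hDn : D ≤ n := Nat.le_ceil D
  have hn : (0 : ℝ) < n := by linarith
  have hparam : ∀ i ≤ n, (i : ℝ) * D / n ∈ Icc 0 D := by
    intro i hi
    have hin : (i : ℝ) ≤ n := by exact_mod_cast hi
    exact ⟨by positivity, by rw [div_le_iff₀ hn]; nlinarith [dist_nonneg (x := a) (y := b)]⟩
  set g : ℕ → X := fun i => f (i * D / n)
  have hstep : ∀ i < n, stepCost H (g i) (g (i + 1)) ≤ D / n := by
    intro i hi
    refine (stepCost_le_dist H _ _).trans_eq ?_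
    rw [hf.dist_apply_apply (hparam i hi.le) (hparam (i + 1) hi), abs_sub_comm]
    push_cast
    rw [show ((i : ℝ) + 1) * D / n - i * D / n = D / n by ring, abs_of_nonneg (by positivity)]
  have hgn : g n = b := by simpa [g, hn.ne'] using hf.apply_dist
  refine ⟨(List.range (n + 1)).map g, ⟨?_, ?_⟩, ?_, ?_⟩
  · simpa [List.range_succ_eq_map, g] using hf.apply_zero
  · rw [List.range_succ, List.map_append, List.getLast?_append]
    simp [hgn]
  · rw [HasShortSteps, List.isChain_map, List.isChain_range_succ]
    exact fun i hi => (hstep i hi).trans ((div_le_one hn).2 hDn)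
  · rw [chainCost_map_range, hd]
    calc ∑ i ∈ Finset.range n, stepCost H (g i) (g (i + 1))
        ≤ ∑ _i ∈ Finset.range n, D / n := Finset.sum_le_sum fun i hi =>
          hstep i (Finset.mem_range.1 hi)
      _ = D := by rw [Finset.sum_const, Finset.card_range, nsmul_eq_mul]; field_simp

lemma exists_hasShortSteps_refinement (hG : GeodesicSpace X) {x y : X} {l : List X}
    (hl : IsChainFromTo x y l) :
    ∃ l', IsChainFromTo x y l' ∧ HasShortSteps H l' ∧ chainCost H l' ≤ chainCost H l := by
  induction l generalizing x with
  | nil => exact absurd rfl hl.ne_nil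
  | cons a t ih =>
    obtain rfl : a = x := by simpa using hl.head?_eq
    cases t with
    | nil =>
      obtain rfl : a = y := by simpa using hl.getLast?_eq
      exact ⟨[a], .singleton a, List.isChain_singleton a, le_rfl⟩
    | cons b t =>
      obtain ⟨l₂, hl₂, hshort₂, hcost₂⟩ := ih ⟨rfl, by simpa using hl.getLast?_eq⟩
      obtain ⟨l₁, hl₁, hshort₁, hcost₁⟩ := exists_hasShortSteps_of_step H hG a b
      obtain ⟨l₁, rfl⟩ := List.getLast?_eq_some_iff.1 hl₁.getLast?_eq
      obtain ⟨l₂, rfl⟩ := List.head?_eq_some_iff.1 hl₂.head?_eq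
      refine ⟨l₁ ++ b :: l₂, ⟨?_, ?_⟩, ?_, ?_⟩
      · simpa [List.head?_append] using hl₁.head?_eq
      · simpa [List.getLast?_append] using hl₂.getLast?_eq
      · simpa using hshort₁.append_overlap (l₃ := l₂) (by simpa using hshort₂) (by simp)
      · rw [chainCost_append_cons, chainCost_cons_cons]
        linarith

structure IsTautChain (x y : X) (l : List X) : Prop extends IsChainFromTo x y l where
  hasShortSteps : HasShortSteps H l
  chainCost_le : chainCost H l ≤ elecDist H x y + 1

lemma exists_isTautChain (hG : GeodesicSpace X) (x y : X) : ∃ l, IsTautChain H x y l := by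
  obtain ⟨l, hl, hcost⟩ := exists_chainCost_lt (H := H) x y one_pos
  obtain ⟨l', hl', hshort, hcost'⟩ := exists_hasShortSteps_refinement H hG hl
  exact ⟨l', hl', hshort, by linarith⟩

namespace IsTautChain

variable {H} {x y : X} {l : List X}

lemma reverse (h : IsTautChain H x y l) : IsTautChain H y x l.reverse where
  toIsChainFromTo := h.toIsChainFromTo.reverse
  hasShortSteps := List.isChain_reverse.2 <| h.hasShortSteps.imp fun a b hab => by
    rwa [stepCost_comm]
  chainCost_le := by rw [chainCost_reverse, elecDist_comm]; exact h.chainCost_le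

lemma take (h : IsTautChain H x y l) {i : ℕ} (hi : i < l.length) :
    IsTautChain H x l[i] (l.take (i + 1)) where
  toIsChainFromTo := h.toIsChainFromTo.take hi
  hasShortSteps := h.hasShortSteps.take _
  chainCost_le := by
    linarith [h.chainCost_le, chainCost_take_add_drop H l hi, elecDist_triangle H x l[i] y,
      elecDist_le_chainCost (H := H) (h.toIsChainFromTo.drop hi)]

lemma drop (h : IsTautChain H x y l) {i : ℕ} (hi : i < l.length) :
    IsTautChain H l[i] y (l.drop i) where
  toIsChainFromTo := h.toIsChainFromTo.drop hi
  hasShortSteps := h.hasShortSteps.drop _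
  chainCost_le := by
    linarith [h.chainCost_le, chainCost_take_add_drop H l hi, elecDist_triangle H x l[i] y,
      elecDist_le_chainCost (H := H) (h.toIsChainFromTo.take hi)]

lemma elecDist_add_elecDist_le (h : IsTautChain H x y l) {c : X} (hc : c ∈ l) (p : X) :
    elecDist H x p + elecDist H p y ≤ elecDist H x y + 1 + 2 * elecDist H p c := by
  linarith [h.toIsChainFromTo.elecDist_add_elecDist_le H hc, h.chainCost_le,
    elecDist_triangle H x c p, elecDist_triangle H p c y, elecDist_comm H c p]

end IsTautChain

end TautChains

section ElecInfDist

noncomputable def elecInfDist (q : X) : List X → ℝ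
  | [] => 0
  | [a] => elecDist H q a
  | a :: b :: l => min (elecDist H q a) (elecInfDist q (b :: l))

variable {H} {l : List X}

lemma elecInfDist_le {q c : X} (hc : c ∈ l) : elecInfDist H q l ≤ elecDist H q c := by
  induction l with
  | nil => simp at hc
  | cons a l ih =>
    cases l with
    | nil => obtain rfl := List.mem_singleton.1 hc; rfl
    | cons b l =>
      rcases List.mem_cons.1 hc with rfl | hc
      · exact min_le_left _ _
      · exact (min_le_right _ _).trans (ih hc)

lemma exists_mem_elecInfDist_eq (hl : l ≠ []) (q : X) :
    ∃ c ∈ l, elecInfDist H q l = elecDist H q c := by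
  induction l with
  | nil => exact absurd rfl hl
  | cons a l ih =>
    cases l with
    | nil => exact ⟨a, List.mem_singleton_self a, rfl⟩
    | cons b l =>
      obtain ⟨c, hc, hce⟩ := ih (List.cons_ne_nil b l)
      rcases min_choice (elecDist H q a) (elecInfDist H q (b :: l)) with h | h
      · exact ⟨a, List.mem_cons_self, h⟩
      · exact ⟨c, List.mem_cons_of_mem a hc, h.trans hce⟩

lemma elecInfDist_le_elecDist_add (hl : l ≠ []) (p q : X) :
    elecInfDist H p l ≤ elecDist H p q + elecInfDist H q l := by
  obtain ⟨c, hc, hce⟩ := exists_mem_elecInfDist_eq (H := H) hl q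
  rw [hce]
  exact (elecInfDist_le hc).trans (elecDist_triangle H p q c)

lemma IsGeodesicFromTo.continuousOn_elecInfDist {f : ℝ → X} {x y : X}
    (hf : IsGeodesicFromTo f x y) (hl : l ≠ []) :
    ContinuousOn (fun u => elecInfDist H (f u) l) (Icc 0 (dist x y)) := by
  refine (LipschitzOnWith.of_dist_le_mul (K := 1) fun u hu v hv => ?_).continuousOn
  have hfuv := (elecDist_le_dist H (f u) (f v)).trans_eq (hf.dist_apply_apply hu hv)
  rw [NNReal.coe_one, one_mul, Real.dist_eq, Real.dist_eq, abs_sub_le_iff]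
  constructor
  · linarith [elecInfDist_le_elecDist_add (H := H) hl (f u) (f v)]
  · linarith [elecInfDist_le_elecDist_add (H := H) hl (f v) (f u), elecDist_comm H (f u) (f v)]

end ElecInfDist

section Quasiconvex

variable {C : ℝ}

lemma elecDist_le_of_quasiconvexSet {A : Set X} (hA : A ∈ H) (hAC : QuasiconvexSet C A)
    {a b c : X} (ha : a ∈ A) (hb : b ∈ A) (hc : c ∈ A) {g : ℝ → X} (hg : IsGeodesicFromTo g a b)
    {t : ℝ} (ht : t ∈ Icc 0 (dist a b)) : elecDist H (g t) c ≤ C + 1 := by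
  have hinf := hAC a ha b hb g 0 (dist a b) hg.isGeodesicSegment hg.apply_zero hg.apply_dist t ht
  refine le_of_forall_pos_le_add fun ε hε => ?_
  obtain ⟨p, hp, hdp⟩ := (infDist_lt_iff ⟨a, ha⟩).1 (hinf.trans_lt (lt_add_of_pos_right C hε))
  linarith [elecDist_le_dist_add H (g t) p c, elecDist_le_one_of_mem H hA hp hc]

lemma elecDist_le_of_stepCost_le_one (hC : 0 ≤ C) (hqc : ∀ A ∈ H, QuasiconvexSet C A)
    {a b : X} (hab : stepCost H a b ≤ 1) {g : ℝ → X} (hg : IsGeodesicFromTo g a b) {t : ℝ}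
    (ht : t ∈ Icc 0 (dist a b)) : elecDist H (g t) a ≤ C + 1 ∧ elecDist H (g t) b ≤ C + 1 := by
  rcases stepCost_eq_dist_or H a b with hd | ⟨-, A, hA, ha, hb⟩
  · have := hg.dist_apply ht
    have := hg.dist_apply_right ht
    constructor <;> linarith [elecDist_le_dist H (g t) a, elecDist_le_dist H (g t) b,
      dist_comm a (g t), ht.1, ht.2]
  · exact ⟨elecDist_le_of_quasiconvexSet H hA (hqc A hA) ha hb ha hg ht,
      elecDist_le_of_quasiconvexSet H hA (hqc A hA) ha hb hb hg ht⟩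

end Quasiconvex

section LogarithmicTracking

lemma IsChainFromTo.dist_le_or_exists_jump {x y : X} {l : List X} (hl : IsChainFromTo x y l) :
    dist x y ≤ chainCost H l ∨ 2 ≤ chainCost H l ∨
      ∃ A ∈ H, ∃ a ∈ l, ∃ b ∈ l, a ∈ A ∧ b ∈ A ∧ dist x a + 1 + dist b y ≤ chainCost H l := by
  induction l generalizing x with
  | nil => exact absurd rfl hl.ne_nil
  | cons p t ih =>
    obtain rfl : p = x := by simpa using hl.head?_eq
    cases t with
    | nil =>
      obtain rfl : p = y := by simpa using hl.getLast?_eq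
      simp
    | cons q t =>
      have htail := ih ⟨rfl, by simpa using hl.getLast?_eq⟩
      rw [chainCost_cons_cons]
      have h0 := chainCost_nonneg H (q :: t)
      rcases stepCost_eq_dist_or H p q with hpq | ⟨hpq, A, hA, hp, hq⟩
      · rcases htail with hd | h2 | ⟨A, hA, a, ha, b, hb, haA, hbA, hj⟩
        · exact .inl (by linarith [dist_triangle p q y])
        · exact .inr (.inl (by linarith [stepCost_nonneg H p q]))
        · exact .inr (.inr ⟨A, hA, a, .tail _ ha, b, .tail _ hb, haA, hbA,
            by linarith [dist_triangle p q a]⟩)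
      · rcases htail with hd | h2 | ⟨A', -, a, -, b, -, -, -, hj⟩
        · exact .inr (.inr ⟨A, hA, p, .head _, q, .tail _ (.head _), hp, hq,
            by rw [dist_self]; linarith⟩)
        · exact .inr (.inl (by linarith))
        · exact .inr (.inl (by
            linarith [dist_nonneg (x := q) (y := a), dist_nonneg (x := b) (y := y)]))

lemma exists_chainCost_take_le_and_drop_le {l : List X} (hs : HasShortSteps H l) (hl : l ≠ []) :
    ∃ i < l.length, chainCost H (l.take (i + 1)) ≤ chainCost H l / 2 + 1 / 2 ∧
      chainCost H (l.drop i) ≤ chainCost H l / 2 + 1 / 2 := by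
  classical
  have hL := chainCost_nonneg H l
  let P : ℕ → Prop := fun i => chainCost H (l.take (i + 1)) ≤ chainCost H l / 2 + 1 / 2
  have hP0 : P 0 := by
    simp only [P]
    rw [chainCost_eq_zero_of_length_le_one H (by simp)]
    linarith
  have hlen := List.length_pos_iff.2 hl
  set i := Nat.findGreatest P (l.length - 1)
  have hi : i < l.length := by
    have := Nat.findGreatest_le (P := P) (l.length - 1)
    omega
  refine ⟨i, hi, Nat.findGreatest_spec (Nat.zero_le _) hP0, ?_⟩
  rcases Nat.lt_or_ge (i + 1) l.length with hi1 | hi1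
  · have hnext : ¬ P (i + 1) := Nat.findGreatest_is_greatest (Nat.lt_succ_self i) (by omega)
    have hstep : stepCost H l[i] l[i + 1] ≤ 1 := List.isChain_iff_getElem.1 hs i hi1
    have hsplit := chainCost_take_add_drop H l hi1
    rw [List.drop_eq_getElem_cons hi, List.drop_eq_getElem_cons hi1, chainCost_cons_cons,
      ← List.drop_eq_getElem_cons hi1]
    simp only [P, not_le] at hnext
    linarith
  · rw [chainCost_eq_zero_of_length_le_one H (by simp only [List.length_drop]; omega)]
    linarith

variable {δ C : ℝ}

lemma exists_mem_elecDist_le_of_chainCost_le_three_halves (hδ : 0 ≤ δ) (hC : 0 ≤ C)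
    (hX : GromovHyperbolicWith (fun a b : X => dist a b) δ) (hG : GeodesicSpace X)
    (hqc : ∀ A ∈ H, QuasiconvexSet C A) {x y : X} {l : List X} (hl : IsChainFromTo x y l)
    (hcost : chainCost H l ≤ 3 / 2) {f : ℝ → X}
    (hf : IsGeodesicFromTo f x y) {u : ℝ} (hu : u ∈ Icc 0 (dist x y)) :
    ∃ c ∈ l, elecDist H (f u) c ≤ 6 * δ + C + 2 := by
  rcases hl.dist_le_or_exists_jump H with hd | h2 | ⟨A, hA, a, ha, b, hb, haA, hbA, hj⟩
  · refine ⟨x, hl.head_mem, ?_⟩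
    linarith [elecDist_le_dist H (f u) x, hf.dist_apply hu, dist_comm x (f u), hu.2]
  · linarith
  · have hxa : dist x a ≤ 1 / 2 := by linarith [dist_nonneg (x := b) (y := y)]
    have hby : dist b y ≤ 1 / 2 := by linarith [dist_nonneg (x := x) (y := a)]
    obtain ⟨g₁, hg₁⟩ := exists_isGeodesicFromTo hG x b
    obtain ⟨g₂, hg₂⟩ := exists_isGeodesicFromTo hG b y
    obtain ⟨g₃, hg₃⟩ := exists_isGeodesicFromTo hG x a
    obtain ⟨g₄, hg₄⟩ := exists_isGeodesicFromTo hG a b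
    rcases slim_triangle hX hf hg₁ hg₂ hu with ⟨t, ht, hdt⟩ | ⟨t, ht, hdt⟩
    · rcases slim_triangle hX hg₁ hg₃ hg₄ ht with ⟨t', ht', hdt'⟩ | ⟨t', ht', hdt'⟩
      · refine ⟨x, hl.head_mem, ?_⟩
        linarith [elecDist_le_dist_add H (f u) (g₃ t') x, dist_triangle (f u) (g₁ t) (g₃ t'),
          elecDist_le_dist H (g₃ t') x, hg₃.dist_apply ht', dist_comm x (g₃ t'), ht'.2]
      · refine ⟨a, ha, ?_⟩
        linarith [elecDist_le_dist_add H (f u) (g₄ t') a, dist_triangle (f u) (g₁ t) (g₄ t'),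
          elecDist_le_of_quasiconvexSet H hA (hqc A hA) haA hbA haA hg₄ ht']
    · refine ⟨b, hb, ?_⟩
      linarith [elecDist_le_dist_add H (f u) (g₂ t) b, elecDist_le_dist H (g₂ t) b,
        hg₂.dist_apply ht, dist_comm b (g₂ t), ht.2]

lemma exists_mem_elecDist_le_of_chainCost_le_two_pow (hδ : 0 ≤ δ) (hC : 0 ≤ C)
    (hX : GromovHyperbolicWith (fun a b : X => dist a b) δ) (hG : GeodesicSpace X)
    (hqc : ∀ A ∈ H, QuasiconvexSet C A) (k : ℕ) {x y : X} {l : List X}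
    (hl : IsChainFromTo x y l) (hs : HasShortSteps H l) (hcost : chainCost H l ≤ 2 ^ k / 2 + 1)
    {f : ℝ → X} (hf : IsGeodesicFromTo f x y) {u : ℝ} (hu : u ∈ Icc 0 (dist x y)) :
    ∃ c ∈ l, elecDist H (f u) c ≤ 6 * δ + C + 2 + 3 * δ * k := by
  induction k generalizing x y l f u with
  | zero =>
    simpa using exists_mem_elecDist_le_of_chainCost_le_three_halves H hδ hC hX hG hqc hl
      (by norm_num at hcost; linarith) hf hu
  | succ k ih =>
    obtain ⟨i, hi, htake, hdrop⟩ := exists_chainCost_take_le_and_drop_le H hs hl.ne_nil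
    have hhalf : chainCost H l / 2 + 1 / 2 ≤ 2 ^ k / 2 + 1 := by rw [pow_succ] at hcost; linarith
    obtain ⟨g₁, hg₁⟩ := exists_isGeodesicFromTo hG x l[i]
    obtain ⟨g₂, hg₂⟩ := exists_isGeodesicFromTo hG l[i] y
    push_cast
    rcases slim_triangle hX hf hg₁ hg₂ hu with ⟨t, ht, hdt⟩ | ⟨t, ht, hdt⟩
    · obtain ⟨c, hc, hce⟩ := ih (hl.take hi) (hs.take _) (htake.trans hhalf) hg₁ ht
      exact ⟨c, List.mem_of_mem_take hc, by linarith [elecDist_le_dist_add H (f u) (g₁ t) c]⟩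
    · obtain ⟨c, hc, hce⟩ := ih (hl.drop hi) (hs.drop _) (hdrop.trans hhalf) hg₂ ht
      exact ⟨c, List.mem_of_mem_drop hc, by linarith [elecDist_le_dist_add H (f u) (g₂ t) c]⟩

end LogarithmicTracking

section Tracking

/- Any radius beating the logarithmic bound of `le_trackingRadius_of_le_log` would do. -/
def trackingRadius (δ C : ℝ) : ℝ := (51 * δ + C + 12) ^ 2

lemma add_le_trackingRadius {δ C : ℝ} (hδ : 0 ≤ δ) (hC : 0 ≤ C) :
    10 * δ + C + 10 ≤ trackingRadius δ C := by
  unfold trackingRadius; nlinarith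

lemma nat_le_three_mul_sqrt_two_pow (n : ℕ) : (n : ℝ) ≤ 3 * √(2 ^ n) := by
  induction n with
  | zero => simp
  | succ n ih =>
    have h2 : (1.4 : ℝ) ≤ √2 := Real.le_sqrt_of_sq_le (by norm_num)
    have h1 : (1 : ℝ) ≤ √(2 ^ n) := Real.one_le_sqrt.2 (one_le_pow₀ (by norm_num))
    rw [pow_succ, Real.sqrt_mul (by positivity)]
    push_cast
    nlinarith

lemma le_trackingRadius_of_le_log {δ C ρ : ℝ} (hδ : 0 ≤ δ) (hC : 0 ≤ C) {n : ℕ}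
    (hn : (2 : ℝ) ^ n ≤ 8 * ρ) (hρ : ρ ≤ 12 * δ + C + 2 + 3 * δ * (n + 1)) :
    ρ ≤ trackingRadius δ C := by
  by_contra! hlt
  set W := 51 * δ + C + 12
  have hρ0 : 0 ≤ ρ := (sq_nonneg W).trans hlt.le
  set s := √ρ
  have hs2 : s ^ 2 = ρ := Real.sq_sqrt hρ0
  have hWs : W ≤ s := Real.le_sqrt_of_sq_le hlt.le
  have hn9 : (n : ℝ) ≤ 9 * s := by
    have h8 : √8 ≤ 3 := Real.sqrt_le_iff.2 ⟨by norm_num, by norm_num⟩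
    calc (n : ℝ) ≤ 3 * √(2 ^ n) := nat_le_three_mul_sqrt_two_pow n
      _ ≤ 3 * √(8 * ρ) := by gcongr
      _ = 3 * (√8 * s) := by rw [Real.sqrt_mul (by norm_num)]
      _ ≤ 9 * s := by nlinarith [Real.sqrt_nonneg ρ]
  nlinarith

variable {δ C : ℝ}

lemma le_trackingRadius_of_near_tautChain (hδ : 0 ≤ δ) (hC : 0 ≤ C)
    (hX : GromovHyperbolicWith (fun a b : X => dist a b) δ) (hG : GeodesicSpace X)
    (hqc : ∀ A ∈ H, QuasiconvexSet C A) {a b q : X} {τ : List X} (hτ : IsTautChain H a b τ)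
    {ρ : ℝ} (hρ : 1 ≤ 8 * ρ) (hab : elecDist H a b ≤ 4 * ρ) (hfar : ∀ c ∈ τ, ρ ≤ elecDist H q c)
    {g : ℝ → X} (hg : IsGeodesicFromTo g a b) {t : ℝ} (ht : t ∈ Icc 0 (dist a b))
    (hq : dist q (g t) ≤ 6 * δ) : ρ ≤ trackingRadius δ C := by
  obtain ⟨n, hn, hn'⟩ := exists_nat_pow_near hρ one_lt_two
  have hcost : chainCost H τ ≤ 2 ^ (n + 1) / 2 + 1 := by
    rw [pow_succ] at hn' ⊢; linarith [hτ.chainCost_le]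
  obtain ⟨c, hc, hce⟩ := exists_mem_elecDist_le_of_chainCost_le_two_pow H hδ hC hX hG hqc (n + 1)
    hτ.toIsChainFromTo hτ.hasShortSteps hcost hg ht
  refine le_trackingRadius_of_le_log hδ hC hn ?_
  push_cast at hce
  linarith [hfar c hc, elecDist_le_dist_add H q (g t) c]

def TracksGeodesics (R : ℝ) (x y : X) (l : List X) : Prop :=
  ∀ ⦃f : ℝ → X⦄, IsGeodesicFromTo f x y → ∀ u ∈ Icc 0 (dist x y), ∃ c ∈ l, elecDist H (f u) c ≤ R

namespace IsTautChain

variable {H} {x y q : X} {τ : List X} {ρ : ℝ}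

/- If `q` were `6δ`-close to `[x, τ[p]]`, a thin triangle with `τ[p - 1]` would put it near a
geodesic tracked by the prefix `τ.take p` (by induction) or near the step from `τ[p - 1]` to `τ[p]`
(by quasiconvexity), both of which are `2ρ`-far from `q`. -/
lemma lt_dist_of_forall_mem_take_lt (hδ : 0 ≤ δ) (hC : 0 ≤ C)
    (hX : GromovHyperbolicWith (fun a b : X => dist a b) δ) (hG : GeodesicSpace X)
    (hqc : ∀ A ∈ H, QuasiconvexSet C A) (hτ : IsTautChain H x y τ)
    (ih : ∀ ⦃x' y' : X⦄ ⦃τ' : List X⦄, IsTautChain H x' y' τ' → τ'.length < τ.length →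
      TracksGeodesics H (trackingRadius δ C) x' y' τ')
    (hρ : trackingRadius δ C < ρ) (hfar : ∀ c ∈ τ, ρ ≤ elecDist H q c) {p : ℕ}
    (hp : p < τ.length) (hbefore : ∀ c ∈ τ.take p, 2 * ρ < elecDist H q c) {g : ℝ → X}
    (hg : IsGeodesicFromTo g x τ[p]) {t : ℝ} (ht : t ∈ Icc 0 (dist x τ[p])) :
    6 * δ < dist q (g t) := by
  by_contra! hq
  have hR := add_le_trackingRadius hδ hC
  obtain rfl | hp0 := Nat.eq_zero_or_pos p
  · have hd : dist x τ[0] = 0 := by rw [hτ.getElem_zero hp, dist_self]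
    have hgt : g t = x := by rw [← hg.apply_zero, show t = 0 by linarith [ht.1, ht.2]]
    linarith [hfar x hτ.head_mem, elecDist_le_dist H q x, hgt ▸ hq]
  have hpred : p - 1 < τ.length := by omega
  have hpred_mem : τ[p - 1] ∈ τ.take p := by
    rw [List.mem_take_iff_getElem]; exact ⟨p - 1, by simp; omega, by simp⟩
  obtain ⟨g₁, hg₁⟩ := exists_isGeodesicFromTo hG x τ[p - 1]
  obtain ⟨g₂, hg₂⟩ := exists_isGeodesicFromTo hG τ[p - 1] τ[p]
  rcases slim_triangle hX hg hg₁ hg₂ ht with ⟨t', ht', hdt'⟩ | ⟨t', ht', hdt'⟩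
  · have hprefix := hτ.take hpred
    rw [Nat.sub_add_cancel hp0] at hprefix
    obtain ⟨c, hc, hce⟩ := ih hprefix (by simp; omega) hg₁ t' ht'
    linarith [hbefore c hc, elecDist_le_dist_add H q (g₁ t') c, dist_triangle q (g t) (g₁ t')]
  · have hstep : stepCost H τ[p - 1] τ[p] ≤ 1 := by
      simpa [Nat.sub_add_cancel hp0] using
        List.isChain_iff_getElem.1 hτ.hasShortSteps (p - 1) (by omega)
    have := (elecDist_le_of_stepCost_le_one H hC hqc hstep hg₂ ht').1
    linarith [hbefore _ hpred_mem, elecDist_le_dist_add H q (g₂ t') τ[p - 1],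
      dist_triangle q (g t) (g₂ t')]

/- Let `b` be the last point of `τ` within `2ρ` of `q`. A thin triangle with `b` puts `q` near
`[b, y]`, excluded by the previous lemma applied to the reversed chain, or near `[τ[p], b]`, which
the part of `τ` between `τ[p]` and `b`, of electric length at most `4ρ`, tracks logarithmically. -/
lemma lt_dist_of_elecDist_getElem_le (hδ : 0 ≤ δ) (hC : 0 ≤ C)
    (hX : GromovHyperbolicWith (fun a b : X => dist a b) δ) (hG : GeodesicSpace X)
    (hqc : ∀ A ∈ H, QuasiconvexSet C A) (hτ : IsTautChain H x y τ)
    (ih : ∀ ⦃x' y' : X⦄ ⦃τ' : List X⦄, IsTautChain H x' y' τ' → τ'.length < τ.length →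
      TracksGeodesics H (trackingRadius δ C) x' y' τ')
    (hρ : trackingRadius δ C < ρ) (hfar : ∀ c ∈ τ, ρ ≤ elecDist H q c) {p : ℕ}
    (hp : p < τ.length) (hclose : elecDist H q τ[p] ≤ 2 * ρ) {g : ℝ → X}
    (hg : IsGeodesicFromTo g τ[p] y) {t : ℝ} (ht : t ∈ Icc 0 (dist τ[p] y)) :
    3 * δ < dist q (g t) := by
  by_contra! hq
  have hR := add_le_trackingRadius hδ hC
  set a := τ[p]
  set τ₁ := (τ.drop p).reverse
  have hτ₁ : IsTautChain H y a τ₁ := (hτ.drop hp).reverse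
  have hτ₁_sub : ∀ c ∈ τ₁, c ∈ τ := fun c hc => List.mem_of_mem_drop (List.mem_reverse.1 hc)
  obtain ⟨p₂, hp₂, hclose₂, hbefore₂⟩ :=
    List.exists_getElem_forall_mem_take_not (P := fun c => elecDist H q c ≤ 2 * ρ)
      ⟨a, hτ₁.getLast_mem, hclose⟩
  simp only [not_le] at hbefore₂ hclose₂
  set b := τ₁[p₂]
  obtain ⟨h₁, hh₁⟩ := exists_isGeodesicFromTo hG a b
  obtain ⟨h₂, hh₂⟩ := exists_isGeodesicFromTo hG b y
  rcases slim_triangle hX hg hh₁ hh₂ ht with ⟨t', ht', hdt'⟩ | ⟨t', ht', hdt'⟩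
  · have hab : elecDist H a b ≤ 4 * ρ := by
      linarith [elecDist_triangle H a q b, elecDist_comm H a q]
    have := le_trackingRadius_of_near_tautChain H hδ hC hX hG hqc (hτ₁.drop hp₂).reverse
      (by linarith) hab
      (fun c hc => hfar c (hτ₁_sub c (List.mem_of_mem_drop (List.mem_reverse.1 hc)))) hh₁ ht'
      (by linarith [dist_triangle q (g t) (h₁ t')])
    linarith
  · have ht'' : dist b y - t' ∈ Icc 0 (dist y b) := by
      rw [dist_comm y b]; exact ⟨by linarith [ht'.2], by linarith [ht'.1]⟩
    have := hτ₁.lt_dist_of_forall_mem_take_lt hδ hC hX hG hqc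
      (fun _ _ _ h hlt => ih h (hlt.trans_le (by simp [τ₁]))) hρ
      (fun c hc => hfar c (hτ₁_sub c hc)) hp₂ hbefore₂ hh₂.reverse ht''
    simp only [sub_sub_cancel] at this
    linarith [dist_triangle q (g t) (h₂ t')]

/- If `q` is at electric distance `ρ > trackingRadius δ C` from `τ`, let `a` be the first point of
`τ` within `2ρ` of `q`; a thin triangle with `a` contradicts one of the two previous lemmas. -/
theorem tracksGeodesics (hδ : 0 ≤ δ) (hC : 0 ≤ C)
    (hX : GromovHyperbolicWith (fun a b : X => dist a b) δ) (hG : GeodesicSpace X)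
    (hqc : ∀ A ∈ H, QuasiconvexSet C A) (hτ : IsTautChain H x y τ) :
    TracksGeodesics H (trackingRadius δ C) x y τ := by
  induction hn : τ.length using Nat.strong_induction_on generalizing x y τ with
  | _ n ih =>
  have ih' : ∀ ⦃x' y' : X⦄ ⦃τ' : List X⦄, IsTautChain H x' y' τ' → τ'.length < τ.length →
      TracksGeodesics H (trackingRadius δ C) x' y' τ' :=
    fun _ _ _ h hlt => ih _ (hn ▸ hlt) h rfl
  intro f hf s hs
  set q := f s
  by_contra! hfar₀
  obtain ⟨c₀, hc₀, hρc₀⟩ := exists_mem_elecInfDist_eq (H := H) hτ.ne_nil q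
  set ρ := elecInfDist H q τ
  have hfar : ∀ c ∈ τ, ρ ≤ elecDist H q c := fun c hc => elecInfDist_le hc
  have hρ : trackingRadius δ C < ρ := hρc₀ ▸ hfar₀ c₀ hc₀
  have hR := add_le_trackingRadius hδ hC
  obtain ⟨p, hp, hclose, hbefore⟩ :=
    List.exists_getElem_forall_mem_take_not (P := fun c => elecDist H q c ≤ 2 * ρ)
      ⟨c₀, hc₀, by linarith⟩
  simp only [not_le] at hbefore hclose
  obtain ⟨g₁, hg₁⟩ := exists_isGeodesicFromTo hG x τ[p]
  obtain ⟨g₂, hg₂⟩ := exists_isGeodesicFromTo hG τ[p] y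
  rcases slim_triangle hX hf hg₁ hg₂ hs with ⟨t, ht, hdt⟩ | ⟨t, ht, hdt⟩
  · linarith [hτ.lt_dist_of_forall_mem_take_lt hδ hC hX hG hqc ih' hρ hfar hp hbefore hg₁ ht]
  · linarith [hτ.lt_dist_of_elecDist_getElem_le hδ hC hX hG hqc ih' hρ hfar hp hclose hg₂ ht]

end IsTautChain

end Tracking

section FourPoint

variable {δ C : ℝ}

lemma elecDist_add_elecDist_apply_le (hδ : 0 ≤ δ) (hC : 0 ≤ C)
    (hX : GromovHyperbolicWith (fun a b : X => dist a b) δ) (hG : GeodesicSpace X)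
    (hqc : ∀ A ∈ H, QuasiconvexSet C A) {x y : X} {f : ℝ → X} (hf : IsGeodesicFromTo f x y)
    {s : ℝ} (hs : s ∈ Icc 0 (dist x y)) :
    elecDist H x (f s) + elecDist H (f s) y ≤ elecDist H x y + 1 + 2 * trackingRadius δ C := by
  obtain ⟨τ, hτ⟩ := exists_isTautChain H hG x y
  obtain ⟨c, hc, hce⟩ := hτ.tracksGeodesics hδ hC hX hG hqc hf s hs
  linarith [hτ.elecDist_add_elecDist_le hc (f s)]

lemma exists_two_mul_elecDist_apply_le (hδ : 0 ≤ δ) (hC : 0 ≤ C)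
    (hX : GromovHyperbolicWith (fun a b : X => dist a b) δ) (hG : GeodesicSpace X)
    (hqc : ∀ A ∈ H, QuasiconvexSet C A) {x y : X} {f : ℝ → X} (hf : IsGeodesicFromTo f x y)
    (w : X) : ∃ u ∈ Icc 0 (dist x y), 2 * elecDist H w (f u) ≤
      elecDist H w x + elecDist H w y - elecDist H x y + 2 + 4 * (3 * δ + trackingRadius δ C) := by
  set R := 3 * δ + trackingRadius δ C with hRdef
  obtain ⟨σ₁, hσ₁⟩ := exists_isTautChain H hG x w
  obtain ⟨σ₂, hσ₂⟩ := exists_isTautChain H hG w y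
  obtain ⟨g₁, hg₁⟩ := exists_isGeodesicFromTo hG x w
  obtain ⟨g₂, hg₂⟩ := exists_isGeodesicFromTo hG w y
  have hnear : ∀ u ∈ Icc 0 (dist x y),
      elecInfDist H (f u) σ₁ ≤ R ∨ elecInfDist H (f u) σ₂ ≤ R := by
    intro u hu
    rcases slim_triangle hX hf hg₁ hg₂ hu with ⟨t, ht, hdt⟩ | ⟨t, ht, hdt⟩
    · obtain ⟨c, hc, hce⟩ := hσ₁.tracksGeodesics hδ hC hX hG hqc hg₁ t ht
      exact .inl (by linarith [elecInfDist_le (H := H) (q := f u) hc,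
        elecDist_le_dist_add H (f u) (g₁ t) c])
    · obtain ⟨c, hc, hce⟩ := hσ₂.tracksGeodesics hδ hC hX hG hqc hg₂ t ht
      exact .inr (by linarith [elecInfDist_le (H := H) (q := f u) hc,
        elecDist_le_dist_add H (f u) (g₂ t) c])
  have hR : 0 ≤ R := by rw [hRdef]; linarith [add_le_trackingRadius hδ hC]
  have hx : elecInfDist H (f 0) σ₁ ≤ R := by
    rw [hf.apply_zero]
    exact (elecInfDist_le hσ₁.head_mem).trans (by rwa [elecDist_self])
  have hy : elecInfDist H (f (dist x y)) σ₂ ≤ R := by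
    rw [hf.apply_dist]
    exact (elecInfDist_le hσ₂.getLast_mem).trans (by rwa [elecDist_self])
  obtain ⟨u, hu, hu₁, hu₂⟩ := isPreconnected_Icc.exists_le_and_le isClosed_Icc
    (hf.continuousOn_elecInfDist hσ₁.ne_nil) (hf.continuousOn_elecInfDist hσ₂.ne_nil)
    (left_mem_Icc.2 dist_nonneg) (right_mem_Icc.2 dist_nonneg) hx hy hnear
  obtain ⟨c₁, hc₁, hc₁e⟩ := exists_mem_elecInfDist_eq (H := H) hσ₁.ne_nil (f u)
  obtain ⟨c₂, hc₂, hc₂e⟩ := exists_mem_elecInfDist_eq (H := H) hσ₂.ne_nil (f u)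
  refine ⟨u, hu, ?_⟩
  linarith [hσ₁.elecDist_add_elecDist_le hc₁ (f u), hσ₂.elecDist_add_elecDist_le hc₂ (f u),
    elecDist_triangle H x (f u) y, elecDist_comm H x w, elecDist_comm H (f u) w]

theorem gromovHyperbolicWith_elecDist (hδ : 0 ≤ δ) (hC : 0 ≤ C)
    (hX : GromovHyperbolicWith (fun a b : X => dist a b) δ) (hG : GeodesicSpace X)
    (hqc : ∀ A ∈ H, QuasiconvexSet C A) :
    GromovHyperbolicWith (elecDist H) (9 * δ + 3 * trackingRadius δ C + 3 / 2) := by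
  intro x y z w
  obtain ⟨f, hf⟩ := exists_isGeodesicFromTo hG x y
  obtain ⟨u, hu, hwu⟩ := exists_two_mul_elecDist_apply_le H hδ hC hX hG hqc hf w
  obtain ⟨g₁, hg₁⟩ := exists_isGeodesicFromTo hG x z
  obtain ⟨g₂, hg₂⟩ := exists_isGeodesicFromTo hG z y
  rcases slim_triangle hX hf hg₁ hg₂ hu with ⟨t, ht, hdt⟩ | ⟨t, ht, hdt⟩
  · refine le_trans ?_ (add_le_add_left (le_max_left _ _) _)
    linarith [elecDist_add_elecDist_apply_le H hδ hC hX hG hqc hg₁ ht,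
      elecDist_triangle H w (g₁ t) x, elecDist_triangle H w (g₁ t) z,
      elecDist_triangle H w (f u) (g₁ t), elecDist_le_dist H (f u) (g₁ t),
      elecDist_comm H (g₁ t) x, elecDist_comm H z w, elecDist_comm H y w]
  · refine le_trans ?_ (add_le_add_left (le_max_right _ _) _)
    linarith [elecDist_add_elecDist_apply_le H hδ hC hX hG hqc hg₂ ht,
      elecDist_triangle H w (g₂ t) z, elecDist_triangle H w (g₂ t) y,
      elecDist_triangle H w (f u) (g₂ t), elecDist_le_dist H (f u) (g₂ t),
      elecDist_comm H (g₂ t) z, elecDist_comm H z w, elecDist_comm H x w, elecDist_comm H y z]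

end FourPoint

end Electric

/-- Relative hyperbolicity (Farb): if `X` is a `δ`-hyperbolic geodesic space and `H` a
collection of uniformly `C`-quasiconvex subsets, then the electric space `E(X, H)` is
`Δ`-hyperbolic for some `Δ` depending only on `δ` and `C`; in particular `X` is weakly
hyperbolic relative to `H`. -/
theorem electric_space_hyperbolic (δ C : ℝ) :
    ∃ Δ : ℝ, ∀ (X : Type) [_inst : MetricSpace X], ∀ (H : Set (Set X)),
      GromovHyperbolicWith (fun a b : X => dist a b) δ →
      GeodesicSpace X →
      (∀ A ∈ H, QuasiconvexSet C A) →
      GromovHyperbolicWith (elecDist H) Δ := by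
  refine ⟨9 * max δ 0 + 3 * Electric.trackingRadius (max δ 0) (max C 0) + 3 / 2,
    fun X _ H hX hG hqc => ?_⟩
  exact Electric.gromovHyperbolicWith_elecDist H (le_max_right δ 0) (le_max_right C 0)
    (hX.mono (le_max_left δ 0)) hG fun A hA => (hqc A hA).mono (le_max_left C 0)
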